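/- Two cubulations of the circle S^1 are bubble equivalent if and only if their numbers of edges have the same parity; consequently CB(S^1) = CBB(S^1) = Z/2Z. -/
import Mathlib


/-- A cubulation of the circle `S¹` is a cyclic polygon, determined by its number of
edges `m ≥ 1`; we model the set of cubulations of `S¹` by `ℕ+`. -/
abbrev S1Cubulation := ℕ+

/-- The bubble moves in dimension 1, coming from complementary balls in the boundary of
the square: the move `b₁` replaces one edge by three edges (`m ↦ m + 2`) and the move
`b₂` replaces two edges by two edges (`m ↦ m`). -/
def S1BubbleMove (m m' : S1Cubulation) : Prop :=
  m' = m + 2 ∨ m' = m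

/-- In dimension 1 both `b₁` and `b₂` are np-bubble moves (neither ball in the boundary
of the square contains two parallel edges is automatic), so the np-bubble moves coincide
with the bubble moves. -/
def S1NPBubbleMove (m m' : S1Cubulation) : Prop :=
  m' = m + 2 ∨ m' = m

/-- Bubble equivalence of cubulations of `S¹`. -/
def S1BubbleEquiv : S1Cubulation → S1Cubulation → Prop :=
  Relation.EqvGen S1BubbleMove

/-- np-bubble equivalence of cubulations of `S¹`. -/
def S1NPBubbleEquiv : S1Cubulation → S1Cubulation → Prop :=
  Relation.EqvGen S1NPBubbleMove

/-- The setoid whose quotient is `CB(S¹)`. -/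
def S1BubbleSetoid : Setoid S1Cubulation :=
  ⟨S1BubbleEquiv, Relation.EqvGen.is_equivalence S1BubbleMove⟩

/-- The setoid whose quotient is `CBB(S¹)`. -/
def S1NPBubbleSetoid : Setoid S1Cubulation :=
  ⟨S1NPBubbleEquiv, Relation.EqvGen.is_equivalence S1NPBubbleMove⟩


lemma S1_aux : ∀ n : ℕ, ∀ m m' : S1Cubulation,
    (m' : ℕ) = (m : ℕ) + 2 * n → S1BubbleEquiv m m' := by
  intro n
  induction n with
  | zero =>
    intro m m' h
    have : m' = m := by rw [← PNat.coe_inj]; simpa using h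
    subst this; exact Relation.EqvGen.refl _
  | succ k ih =>
    intro m m' h
    have h1 : S1BubbleEquiv m (m + 2) :=
      Relation.EqvGen.rel _ _ (Or.inl rfl)
    have h2 : S1BubbleEquiv (m + 2) m' := by
      apply ih
      push_cast
      omega
    exact Relation.EqvGen.trans _ _ _ h1 h2

lemma S1_key (m m' : S1Cubulation) :
    S1BubbleEquiv m m' ↔ ((m : ℕ) : ZMod 2) = ((m' : ℕ) : ZMod 2) := by
  constructor
  · intro h
    induction h with
    | rel a b hab =>
      rcases hab with h | h <;> subst h <;> push_cast <;> simp [show ((2:ZMod 2)) = 0 from by decide]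
    | refl a => rfl
    | symm a b _ ih => exact ih.symm
    | trans a b c _ _ ih1 ih2 => exact ih1.trans ih2
  · intro h
    rw [ZMod.natCast_eq_natCast_iff] at h
    have h2 : (m : ℕ) % 2 = (m' : ℕ) % 2 := h
    rcases le_total (m : ℕ) (m' : ℕ) with hle | hle
    · obtain ⟨k, hk⟩ : ∃ k, (m' : ℕ) = (m : ℕ) + 2 * k := ⟨((m':ℕ) - m)/2, by omega⟩
      exact S1_aux k m m' hk
    · obtain ⟨k, hk⟩ : ∃ k, (m : ℕ) = (m' : ℕ) + 2 * k := ⟨((m:ℕ) - m')/2, by omega⟩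
      exact Relation.EqvGen.symm _ _ (S1_aux k m' m hk)

lemma S1NP_key (m m' : S1Cubulation) :
    S1NPBubbleEquiv m m' ↔ ((m : ℕ) : ZMod 2) = ((m' : ℕ) : ZMod 2) :=
  S1_key m m'

lemma zmod2_cases : ∀ x : ZMod 2, x = 0 ∨ x = 1 := by decide

noncomputable def S1e : Quotient S1BubbleSetoid ≃ ZMod 2 where
  toFun := Quotient.lift (fun m : S1Cubulation => ((m : ℕ) : ZMod 2))
    (fun a b h => (S1_key a b).mp h)
  invFun z := Quotient.mk _ (if z = 0 then (2 : ℕ+) else 1)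
  left_inv := by
    apply Quotient.ind
    intro m
    apply Quotient.sound
    apply (S1_key _ m).mpr
    rcases zmod2_cases ((m : ℕ) : ZMod 2) with h | h <;> simp [h] <;> decide
  right_inv z := by
    rcases zmod2_cases z with h | h <;> subst h <;> simp <;> decide

noncomputable def S1eNP : Quotient S1NPBubbleSetoid ≃ ZMod 2 where
  toFun := Quotient.lift (fun m : S1Cubulation => ((m : ℕ) : ZMod 2))
    (fun a b h => (S1NP_key a b).mp h)
  invFun z := Quotient.mk _ (if z = 0 then (2 : ℕ+) else 1)
  left_inv := by
    apply Quotient.ind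
    intro m
    apply Quotient.sound
    apply (S1NP_key _ m).mpr
    rcases zmod2_cases ((m : ℕ) : ZMod 2) with h | h <;> simp [h] <;> decide
  right_inv z := by
    rcases zmod2_cases z with h | h <;> subst h <;> simp <;> decide

/-- Two cubulations of the circle `S¹` are bubble equivalent if and only if their
numbers of edges have the same parity; consequently `CB(S¹) = CBB(S¹) = ℤ/2ℤ`, the
bijections with `ℤ/2ℤ` being induced by the number of edges modulo 2. -/
theorem CB_S1_eq_CBB_S1_eq_Z2 :
    (∀ m m' : S1Cubulation,
        S1BubbleEquiv m m' ↔ ((m : ℕ) : ZMod 2) = ((m' : ℕ) : ZMod 2)) ∧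
    (∃ e : Quotient S1BubbleSetoid ≃ ZMod 2,
        ∀ m : S1Cubulation, e (Quotient.mk S1BubbleSetoid m) = ((m : ℕ) : ZMod 2)) ∧
    (∃ e : Quotient S1NPBubbleSetoid ≃ ZMod 2,
        ∀ m : S1Cubulation, e (Quotient.mk S1NPBubbleSetoid m) = ((m : ℕ) : ZMod 2)) := by
  exact ⟨S1_key, ⟨S1e, fun m => rfl⟩, ⟨S1eNP, fun m => rfl⟩⟩
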